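/- Let V be a steplike potential with steps V₊, V₋ and threshold x_M, let z ∈ ℂ, and let r₊, r₋ ∈ ℂ satisfy r₊² = z − V₊ and r₋² = z − V₋. Suppose v₁ and v₂ are solutions of −u'' + V u = z u, and there are constants T₁, R₁, T₂, R₂ ∈ ℂ with: v₁(x) = e^{i r₋ x} + R₁ e^{−i r₋ x} for all x ≤ −x_M and v₁(x) = T₁ e^{i r₊ x} for all x ≥ x_M; v₂(x) = e^{i r₋ x} + R₂ e^{−i r₋ x} for all x ≤ −x_M and v₂(x) = T₂ e^{−i r₊ x} for all x ≥ x_M. Then r₊ T₁ T₂ = r₋ (R₂ − R₁). -/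

import Mathlib

open Complex MeasureTheory
open scoped Classical

/-- `u` is a solution of `-u'' + V u = z u`: `u` is differentiable with continuous
derivative, and the derivative satisfies the integrated form of the ODE. -/
def IsSolution (V : ℝ → ℝ) (z : ℂ) (u : ℝ → ℂ) : Prop :=
  Differentiable ℝ u ∧ Continuous (deriv u) ∧
    ∀ x : ℝ, deriv u x = deriv u 0 + ∫ t in (0:ℝ)..x, ((V t : ℂ) - z) * u t

/-!
Since `V` is bounded, the derivative `v'` of a solution is locally Lipschitz, hence absolutely
continuous, with `v'' = (V - z) v` almost everywhere (Lebesgue differentiation). So the Wronskian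
`W = v₁ v₂' - v₁' v₂` is absolutely continuous with `W' = 0` a.e., hence constant. Evaluated where
`v₁, v₂` are plane waves, `W = -2i r₊ T₁ T₂` on the right and `W = 2i r₋ (R₁ - R₂)` on the left.
-/

open Set Filter Topology

noncomputable def wronskian (u₁ u₂ : ℝ → ℂ) (x : ℝ) : ℂ := u₁ x * deriv u₂ x - deriv u₁ x * u₂ x

section Solution

variable {V : ℝ → ℝ} {z : ℂ} {u : ℝ → ℂ}

lemma locallyIntegrable_potential_mul (hVmeas : Measurable V)
    (hVbdd : ∃ C : ℝ, ∀ x : ℝ, |V x| ≤ C) (hu : Continuous u) :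
    LocallyIntegrable (fun t => ((V t : ℂ) - z) * u t) volume := by
  obtain ⟨C, hC⟩ := hVbdd
  have hVz : MemLp (fun t => (V t : ℂ) - z) ⊤ volume :=
    memLp_top_of_bound ((measurable_ofReal.comp hVmeas).sub_const z).aestronglyMeasurable
      (C + ‖z‖) (Eventually.of_forall fun t => (norm_sub_le _ _).trans (by simpa using hC t))
  exact (hVz.locallyIntegrable le_top).mul_continuous hu

lemma IsSolution.ae_hasDerivAt_deriv (hu : IsSolution V z u)
    (hloc : LocallyIntegrable (fun t => ((V t : ℂ) - z) * u t) volume) :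
    ∀ᵐ x, HasDerivAt (deriv u) (((V x : ℂ) - z) * u x) x := by
  filter_upwards [LocallyIntegrable.ae_hasDerivAt_integral hloc] with x hx
  rw [show deriv u = _ from funext hu.2.2]
  exact (hx 0).const_add _

lemma IsSolution.absolutelyContinuousOnInterval_deriv (hu : IsSolution V z u)
    (hVbdd : ∃ C : ℝ, ∀ x : ℝ, |V x| ≤ C)
    (hloc : LocallyIntegrable (fun t => ((V t : ℂ) - z) * u t) volume) (a b : ℝ) :
    AbsolutelyContinuousOnInterval (deriv u) a b := by
  obtain ⟨C, hC⟩ := hVbdd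
  obtain ⟨M, hM⟩ := (isCompact_uIcc : IsCompact (uIcc a b)).exists_bound_of_continuousOn
    hu.1.continuous.continuousOn
  refine (LipschitzOnWith.of_dist_le' (K := (C + ‖z‖) * M) fun x hx y hy => ?_)
    |>.absolutelyContinuousOnInterval
  have hint : ∀ p q, IntervalIntegrable (fun t => ((V t : ℂ) - z) * u t) volume p q :=
    fun p q => (hloc.integrableOn_isCompact isCompact_uIcc).mono_set uIoc_subset_uIcc
      |> intervalIntegrable_iff.mpr
  rw [dist_eq_norm, hu.2.2 x, hu.2.2 y, add_sub_add_left_eq_sub,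
    intervalIntegral.integral_interval_sub_left (hint 0 x) (hint 0 y), Real.dist_eq]
  refine intervalIntegral.norm_integral_le_of_norm_le_const fun t ht => ?_
  have ht' : t ∈ uIcc a b := uIcc_subset_uIcc hy hx (uIoc_subset_uIcc ht)
  rw [norm_mul]
  exact mul_le_mul ((norm_sub_le _ _).trans (by simpa using hC t)) (hM t ht') (norm_nonneg _)
    ((abs_nonneg _).trans (hC t) |>.trans (le_add_of_nonneg_right (norm_nonneg z)))

lemma IsSolution.contDiff (hu : IsSolution V z u) : ContDiff ℝ 1 u :=
  contDiff_one_iff_deriv.mpr ⟨hu.1, hu.2.1⟩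

end Solution

lemma IsSolution.wronskian_eq {V : ℝ → ℝ} {z : ℂ} {v₁ v₂ : ℝ → ℂ} (hVmeas : Measurable V)
    (hVbdd : ∃ C : ℝ, ∀ x : ℝ, |V x| ≤ C) (hv₁ : IsSolution V z v₁) (hv₂ : IsSolution V z v₂)
    (a b : ℝ) : wronskian v₁ v₂ a = wronskian v₁ v₂ b := by
  have hloc₁ := locallyIntegrable_potential_mul (z := z) hVmeas hVbdd hv₁.1.continuous
  have hloc₂ := locallyIntegrable_potential_mul (z := z) hVmeas hVbdd hv₂.1.continuous
  have hac : AbsolutelyContinuousOnInterval (wronskian v₁ v₂) a b :=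
    (hv₁.contDiff.contDiffOn.absolutelyContinuousOnInterval.smul
      (hv₂.absolutelyContinuousOnInterval_deriv hVbdd hloc₂ a b)).sub
    ((hv₁.absolutelyContinuousOnInterval_deriv hVbdd hloc₁ a b).smul
      hv₂.contDiff.contDiffOn.absolutelyContinuousOnInterval)
  have hW' : ∀ᵐ x, x ∈ uIcc a b → HasDerivAt (wronskian v₁ v₂) 0 x := by
    filter_upwards [hv₁.ae_hasDerivAt_deriv hloc₁, hv₂.ae_hasDerivAt_deriv hloc₂] with x h₁ h₂ _
    exact (((hv₁.1 x).hasDerivAt.mul h₂).sub (h₁.mul (hv₂.1 x).hasDerivAt)).congr_deriv (by ring)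
  obtain ⟨C, hC⟩ := hac.const_of_ae_hasDerivAt_zero hW'
  rw [hC a left_mem_uIcc, hC b right_mem_uIcc]

lemma hasDerivAt_planeWaves (k A B : ℂ) (x : ℝ) :
    HasDerivAt (fun y : ℝ => A * exp (I * k * y) + B * exp (-(I * k * y)))
      (I * k * (A * exp (I * k * x) - B * exp (-(I * k * x)))) x := by
  have hexp : ∀ c : ℂ, HasDerivAt (fun y : ℝ => exp (c * y)) (c * exp (c * x)) x := fun c => by
    simpa [mul_comm] using (((hasDerivAt_id (x : ℂ)).const_mul c).cexp).comp_ofReal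
  have h := ((hexp (I * k)).const_mul A).add ((hexp (-(I * k))).const_mul B)
  simp only [neg_mul] at h
  exact h.congr_deriv (by ring)

lemma wronskian_eq_of_eventuallyEq_planeWaves {u₁ u₂ : ℝ → ℂ} {k A₁ B₁ A₂ B₂ : ℂ} {x : ℝ}
    (h₁ : u₁ =ᶠ[𝓝 x] fun y : ℝ => A₁ * exp (I * k * y) + B₁ * exp (-(I * k * y)))
    (h₂ : u₂ =ᶠ[𝓝 x] fun y : ℝ => A₂ * exp (I * k * y) + B₂ * exp (-(I * k * y))) :
    wronskian u₁ u₂ x = 2 * I * k * (A₂ * B₁ - A₁ * B₂) := by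
  have hexp : exp (I * k * x) * exp (-(I * k * x)) = 1 := by
    rw [← exp_add, add_neg_cancel, exp_zero]
  rw [wronskian, h₁.eq_of_nhds, h₂.eq_of_nhds, h₁.deriv_eq, h₂.deriv_eq,
    (hasDerivAt_planeWaves k A₁ B₁ x).deriv, (hasDerivAt_planeWaves k A₂ B₂ x).deriv]
  linear_combination 2 * I * k * (A₂ * B₁ - A₁ * B₂) * hexp

theorem reflection_difference_relation_right_general
    (V : ℝ → ℝ) (xM : ℝ)
    (hVmeas : Measurable V) (hVbdd : ∃ C : ℝ, ∀ x : ℝ, |V x| ≤ C)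
    (z rp rm : ℂ)
    (v₁ v₂ : ℝ → ℂ) (hv₁ : IsSolution V z v₁) (hv₂ : IsSolution V z v₂)
    (T₁ R₁ T₂ R₂ : ℂ)
    (hv₁L : ∀ x : ℝ, x ≤ -xM →
      v₁ x = Complex.exp (Complex.I * rm * x) + R₁ * Complex.exp (-(Complex.I * rm * x)))
    (hv₁R : ∀ x : ℝ, xM ≤ x → v₁ x = T₁ * Complex.exp (Complex.I * rp * x))
    (hv₂L : ∀ x : ℝ, x ≤ -xM →
      v₂ x = Complex.exp (Complex.I * rm * x) + R₂ * Complex.exp (-(Complex.I * rm * x)))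
    (hv₂R : ∀ x : ℝ, xM ≤ x → v₂ x = T₂ * Complex.exp (-(Complex.I * rp * x))) :
    rp * T₁ * T₂ = rm * (R₂ - R₁) := by
  have hleft : wronskian v₁ v₂ (-xM - 1) = 2 * I * rm * (R₁ - R₂) := by
    have hnhds : Iio (-xM) ∈ 𝓝 (-xM - 1) := Iio_mem_nhds (by linarith)
    rw [wronskian_eq_of_eventuallyEq_planeWaves (k := rm) (A₁ := 1) (B₁ := R₁) (A₂ := 1)
      (B₂ := R₂)
      (eventually_of_mem hnhds fun x hx => by simp [hv₁L x hx.le])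
      (eventually_of_mem hnhds fun x hx => by simp [hv₂L x hx.le])]
    ring
  have hright : wronskian v₁ v₂ (xM + 1) = -2 * I * rp * T₁ * T₂ := by
    have hnhds : Ioi xM ∈ 𝓝 (xM + 1) := Ioi_mem_nhds (by linarith)
    rw [wronskian_eq_of_eventuallyEq_planeWaves (k := rp) (A₁ := T₁) (B₁ := 0) (A₂ := 0)
      (B₂ := T₂)
      (eventually_of_mem hnhds fun x hx => by simp [hv₁R x hx.le])
      (eventually_of_mem hnhds fun x hx => by simp [hv₂R x hx.le])]
    ring
  have hW := hv₁.wronskian_eq hVmeas hVbdd hv₂ (-xM - 1) (xM + 1)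
  rw [hleft, hright] at hW
  have hI : (2 * I : ℂ) ≠ 0 := mul_ne_zero two_ne_zero I_ne_zero
  apply mul_left_cancel₀ hI
  linear_combination hW

theorem reflection_difference_relation_right
    (V : ℝ → ℝ) (Vp Vm xM : ℝ)
    (hVmeas : Measurable V) (hVbdd : ∃ C : ℝ, ∀ x : ℝ, |V x| ≤ C)
    (hxM : 0 < xM)
    (hVp : ∀ x : ℝ, xM < x → V x = Vp)
    (hVm : ∀ x : ℝ, x < -xM → V x = Vm)
    (z rp rm : ℂ) (hrp : rp ^ 2 = z - (Vp : ℂ)) (hrm : rm ^ 2 = z - (Vm : ℂ))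
    (v₁ v₂ : ℝ → ℂ) (hv₁ : IsSolution V z v₁) (hv₂ : IsSolution V z v₂)
    (T₁ R₁ T₂ R₂ : ℂ)
    (hv₁L : ∀ x : ℝ, x ≤ -xM →
      v₁ x = Complex.exp (Complex.I * rm * x) + R₁ * Complex.exp (-(Complex.I * rm * x)))
    (hv₁R : ∀ x : ℝ, xM ≤ x → v₁ x = T₁ * Complex.exp (Complex.I * rp * x))
    (hv₂L : ∀ x : ℝ, x ≤ -xM →
      v₂ x = Complex.exp (Complex.I * rm * x) + R₂ * Complex.exp (-(Complex.I * rm * x)))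
    (hv₂R : ∀ x : ℝ, xM ≤ x → v₂ x = T₂ * Complex.exp (-(Complex.I * rp * x))) :
    rp * T₁ * T₂ = rm * (R₂ - R₁) :=
  reflection_difference_relation_right_general V xM hVmeas hVbdd z rp rm v₁ v₂ hv₁ hv₂ T₁ R₁ T₂ R₂
    hv₁L hv₁R hv₂L hv₂R
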